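/- arXiv:1805.01169 — 2 statements merged into one kernel-verified Lean document; each statement's English description precedes it below -/
import Mathlib

section
/- Log-Harnack is equivalent to an entropy inequality for kernels: let π be a probability measure on a measurable space E, and let μ, ν be probability measures on E absolutely continuous with respect to π with strictly positive densities p and q. Then the inequality ∫ log Φ dμ ≤ log(∫ Φ dν) + C holds for all bounded measurable Φ ≥ 1 if and only if the relative entropy satisfies ∫ p·log(p/q) dπ ≤ C. -/
open MeasureTheory Filter

/-- Log-Harnack is equivalent to a relative entropy inequality for densities. -/
theorem logHarnack_iff_entropy
    {E : Type*} [MeasurableSpace E]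
    (π : Measure E) [IsProbabilityMeasure π]
    (p q : E → ℝ) (hp : Measurable p) (hq : Measurable q)
    (hppos : ∀ x, 0 < p x) (hqpos : ∀ x, 0 < q x)
    (hp1 : ∫ x, p x ∂π = 1) (hq1 : ∫ x, q x ∂π = 1)
    (C : ℝ) (hC : 0 ≤ C)
    (hent : Integrable (fun x => p x * Real.log (p x / q x)) π) :
    (∀ Φ : E → ℝ, Measurable Φ → (∃ B, ∀ x, Φ x ≤ B) → (∀ x, 1 ≤ Φ x) →
        ∫ x, Real.log (Φ x) * p x ∂π
          ≤ Real.log (∫ x, Φ x * q x ∂π) + C)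
      ↔ ∫ x, p x * Real.log (p x / q x) ∂π ≤ C := by
  have hpint : Integrable p π := by
    by_contra hco
    rw [integral_undef hco] at hp1
    exact one_ne_zero hp1.symm
  have hqint : Integrable q π := by
    by_contra hco
    rw [integral_undef hco] at hq1
    exact one_ne_zero hq1.symm
  set f : E → ℝ := fun x => Real.log (p x / q x) with hfdef
  have hfm : Measurable f := (hp.div hq).log
  constructor
  · -- log-Harnack ⇒ entropy inequality
    intro h
    set Φ : ℕ → E → ℝ := fun n x => min (max (p x / q x) (((n : ℝ) + 1)⁻¹)) ((n : ℝ) + 1)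
      with hΦdef
    have hn1 : ∀ n : ℕ, (1 : ℝ) ≤ (n : ℝ) + 1 := fun n => by
      have : (0 : ℝ) ≤ (n : ℝ) := Nat.cast_nonneg n
      linarith
    have hΦm : ∀ n, Measurable (Φ n) := fun n =>
      ((hp.div hq).max measurable_const).min measurable_const
    have hrpos : ∀ x, 0 < p x / q x := fun x => div_pos (hppos x) (hqpos x)
    have hΦlb : ∀ (n : ℕ) (x : E), ((n : ℝ) + 1)⁻¹ ≤ Φ n x := by
      intro n x
      refine le_min (le_max_right _ _) ?_
      have h1 := hn1 n
      calc ((n : ℝ) + 1)⁻¹ ≤ 1 := inv_le_one_of_one_le₀ h1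
        _ ≤ (n : ℝ) + 1 := h1
    have hΦub : ∀ (n : ℕ) (x : E), Φ n x ≤ (n : ℝ) + 1 := fun n x => min_le_right _ _
    have hΦpos : ∀ n x, 0 < Φ n x := fun n x =>
      lt_of_lt_of_le (by positivity) (hΦlb n x)
    -- the integrands Φ n * q are integrable
    have hΦq : ∀ n, Integrable (fun x => Φ n x * q x) π := fun n =>
      hqint.bdd_mul (c := (n : ℝ) + 1) (hΦm n).aestronglyMeasurable
        (ae_of_all _ fun x => by
          rw [Real.norm_eq_abs, abs_of_pos (hΦpos n x)]; exact hΦub n x)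
    have hIpos : ∀ n, 0 < ∫ x, Φ n x * q x ∂π := by
      intro n
      have hlow : Integrable (fun x => ((n : ℝ) + 1)⁻¹ * q x) π := hqint.const_mul _
      have heq : ∫ x, ((n : ℝ) + 1)⁻¹ * q x ∂π = ((n : ℝ) + 1)⁻¹ := by
        rw [integral_const_mul, hq1, mul_one]
      have hle : ((n : ℝ) + 1)⁻¹ ≤ ∫ x, Φ n x * q x ∂π := by
        rw [← heq]
        exact integral_mono hlow (hΦq n) fun x =>
          mul_le_mul_of_nonneg_right (hΦlb n x) (hqpos x).le
      have hpos : (0 : ℝ) < ((n : ℝ) + 1)⁻¹ := by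
        have := hn1 n; positivity
      linarith
    -- |log (Φ n x)| ≤ |f x|
    have habs : ∀ (n : ℕ) (x : E), |Real.log (Φ n x)| ≤ |f x| := by
      intro n x
      have h1 := hn1 n
      have hr := hrpos x
      rw [abs_le]
      constructor
      · -- lower bound : -|f x| ≤ log (Φ n x)
        have hmin : min (p x / q x) 1 ≤ Φ n x := by
          refine le_min (le_trans (min_le_left _ _) (le_max_left _ _)) ?_
          exact le_trans (min_le_right _ _) h1
        have : -|f x| ≤ Real.log (min (p x / q x) 1) := by
          rcases le_total (p x / q x) 1 with hle | hle
          · rw [min_eq_left hle]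
            have : f x ≤ 0 := Real.log_nonpos hr.le hle
            rw [abs_of_nonpos this]; simp [hfdef]
          · rw [min_eq_right hle, Real.log_one]
            exact neg_nonpos.mpr (abs_nonneg _)
        exact this.trans (Real.log_le_log (lt_min hr one_pos) hmin)
      · -- upper bound : log (Φ n x) ≤ |f x|
        have hmax : Φ n x ≤ max (p x / q x) 1 := by
          refine le_trans (min_le_left _ _) (max_le_max le_rfl ?_)
          exact inv_le_one_of_one_le₀ h1
        have hΦposx := hΦpos n x
        refine (Real.log_le_log hΦposx hmax).trans ?_
        rcases le_total (p x / q x) 1 with hle | hle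
        · rw [max_eq_right hle, Real.log_one]
          exact abs_nonneg _
        · rw [max_eq_left hle]
          have : 0 ≤ f x := Real.log_nonneg hle
          rw [abs_of_nonneg this]
    -- the key inequality for each n
    have key : ∀ n : ℕ, ∫ x, Real.log (Φ n x) * p x ∂π
        ≤ Real.log (∫ x, Φ n x * q x ∂π) + C := by
      intro n
      have h1 := hn1 n
      have hm : Measurable fun x => ((n : ℝ) + 1) * Φ n x := measurable_const.mul (hΦm n)
      have hbd : ∃ B, ∀ x, ((n : ℝ) + 1) * Φ n x ≤ B :=
        ⟨((n : ℝ) + 1) * ((n : ℝ) + 1), fun x =>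
          mul_le_mul_of_nonneg_left (hΦub n x) (by linarith)⟩
      have hge1 : ∀ x, 1 ≤ ((n : ℝ) + 1) * Φ n x := by
        intro x
        have := hΦlb n x
        have hpos : (0 : ℝ) < (n : ℝ) + 1 := by linarith
        calc (1 : ℝ) = ((n : ℝ) + 1) * ((n : ℝ) + 1)⁻¹ := (mul_inv_cancel₀ hpos.ne').symm
          _ ≤ ((n : ℝ) + 1) * Φ n x := mul_le_mul_of_nonneg_left this hpos.le
      have h' := h _ hm hbd hge1
      have hlogΦint : Integrable (fun x => Real.log (Φ n x) * p x) π :=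
        hpint.bdd_mul (c := Real.log ((n : ℝ) + 1)) ((hΦm n).log).aestronglyMeasurable
          (ae_of_all _ fun x => by
            rw [Real.norm_eq_abs, abs_le]
            constructor
            · rw [← Real.log_inv]
              exact Real.log_le_log (by positivity) (hΦlb n x)
            · exact Real.log_le_log (hΦpos n x) (hΦub n x))
      have hLHS : ∫ x, Real.log (((n : ℝ) + 1) * Φ n x) * p x ∂π
          = Real.log ((n : ℝ) + 1) + ∫ x, Real.log (Φ n x) * p x ∂π := by
        have : ∀ x, Real.log (((n : ℝ) + 1) * Φ n x) * p x
            = Real.log ((n : ℝ) + 1) * p x + Real.log (Φ n x) * p x := by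
          intro x
          rw [Real.log_mul (by positivity) (hΦpos n x).ne', add_mul]
        rw [integral_congr_ae (Filter.Eventually.of_forall this),
          integral_add (hpint.const_mul _) hlogΦint, integral_const_mul, hp1, mul_one]
      have hRHS : Real.log (∫ x, (((n : ℝ) + 1) * Φ n x) * q x ∂π)
          = Real.log ((n : ℝ) + 1) + Real.log (∫ x, Φ n x * q x ∂π) := by
        have : (fun x => (((n : ℝ) + 1) * Φ n x) * q x)
            = fun x => ((n : ℝ) + 1) * (Φ n x * q x) := by
          funext x; ring
        rw [this, integral_const_mul, Real.log_mul (by positivity) (hIpos n).ne']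
      rw [hLHS, hRHS] at h'
      linarith
    -- limits
    have tendsto1 : Tendsto (fun n => ∫ x, Real.log (Φ n x) * p x ∂π) atTop
        (nhds (∫ x, p x * Real.log (p x / q x) ∂π)) := by
      refine tendsto_integral_of_dominated_convergence (fun x => |p x * f x|)
        (fun n => ((hΦm n).log.mul hp).aestronglyMeasurable) hent.abs ?_ ?_
      · intro n
        refine Filter.Eventually.of_forall fun x => ?_
        simp only [Real.norm_eq_abs, abs_mul, abs_of_pos (hppos x)]
        rw [mul_comm (p x)]
        exact mul_le_mul_of_nonneg_right (habs n x) (hppos x).le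
      · refine Filter.Eventually.of_forall fun x => ?_
        have hev : ∀ᶠ n : ℕ in atTop, p x * f x = Real.log (Φ n x) * p x := by
          obtain ⟨N, hN⟩ := exists_nat_ge (max (p x / q x)⁻¹ (p x / q x))
          refine Filter.eventually_atTop.2 ⟨N, fun n hn => ?_⟩
          have hNn : (N : ℝ) ≤ (n : ℝ) := Nat.cast_le.2 hn
          have hub : p x / q x ≤ (n : ℝ) + 1 := by
            have := (le_max_right (p x / q x)⁻¹ (p x / q x)).trans hN
            linarith
          have hlb : ((n : ℝ) + 1)⁻¹ ≤ p x / q x := by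
            have h2 : (p x / q x)⁻¹ ≤ (n : ℝ) + 1 := by
              have := (le_max_left (p x / q x)⁻¹ (p x / q x)).trans hN
              linarith
            calc ((n : ℝ) + 1)⁻¹ ≤ ((p x / q x)⁻¹)⁻¹ :=
                  inv_anti₀ (inv_pos.mpr (hrpos x)) h2
              _ = p x / q x := inv_inv _
          have : Φ n x = p x / q x := by
            rw [hΦdef]
            simp only
            rw [max_eq_left hlb, min_eq_left hub]
          rw [this, mul_comm]
        exact Tendsto.congr' hev tendsto_const_nhds
    have tendsto2 : Tendsto (fun n => ∫ x, Φ n x * q x ∂π) atTop (nhds 1) := by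
      rw [← hp1]
      refine tendsto_integral_of_dominated_convergence (fun x => p x + q x)
        (fun n => ((hΦm n).mul hq).aestronglyMeasurable) (hpint.add hqint) ?_ ?_
      · intro n
        refine Filter.Eventually.of_forall fun x => ?_
        rw [Real.norm_eq_abs, abs_of_pos (mul_pos (hΦpos n x) (hqpos x))]
        have h1 : Φ n x ≤ max (p x / q x) 1 :=
          le_trans (min_le_left _ _) (max_le_max le_rfl (inv_le_one_of_one_le₀ (hn1 n)))
        have h2 : max (p x / q x) 1 ≤ p x / q x + 1 := by
          rcases max_cases (p x / q x) 1 with ⟨he, _⟩ | ⟨he, _⟩ <;> rw [he] <;>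
            [linarith; linarith [hrpos x]]
        calc Φ n x * q x ≤ (p x / q x + 1) * q x :=
              mul_le_mul_of_nonneg_right (h1.trans h2) (hqpos x).le
          _ = p x + q x := by rw [add_mul, div_mul_cancel₀ _ (hqpos x).ne', one_mul]
      · refine Filter.Eventually.of_forall fun x => ?_
        have hev : ∀ᶠ n : ℕ in atTop, p x = Φ n x * q x := by
          obtain ⟨N, hN⟩ := exists_nat_ge (max (p x / q x)⁻¹ (p x / q x))
          refine Filter.eventually_atTop.2 ⟨N, fun n hn => ?_⟩
          have hNn : (N : ℝ) ≤ (n : ℝ) := Nat.cast_le.2 hn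
          have hub : p x / q x ≤ (n : ℝ) + 1 := by
            have := (le_max_right (p x / q x)⁻¹ (p x / q x)).trans hN
            linarith
          have hlb : ((n : ℝ) + 1)⁻¹ ≤ p x / q x := by
            have h2 : (p x / q x)⁻¹ ≤ (n : ℝ) + 1 := by
              have := (le_max_left (p x / q x)⁻¹ (p x / q x)).trans hN
              linarith
            calc ((n : ℝ) + 1)⁻¹ ≤ ((p x / q x)⁻¹)⁻¹ :=
                  inv_anti₀ (inv_pos.mpr (hrpos x)) h2
              _ = p x / q x := inv_inv _
          have hΦeq : Φ n x = p x / q x := by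
            rw [hΦdef]; simp only
            rw [max_eq_left hlb, min_eq_left hub]
          rw [hΦeq, div_mul_cancel₀ _ (hqpos x).ne']
        exact Tendsto.congr' hev tendsto_const_nhds
    have tendsto3 : Tendsto (fun n => Real.log (∫ x, Φ n x * q x ∂π) + C) atTop
        (nhds (0 + C)) := by
      have := (tendsto2.log one_ne_zero)
      rw [Real.log_one] at this
      exact this.add tendsto_const_nhds
    have := le_of_tendsto_of_tendsto' tendsto1 tendsto3 key
    linarith
  · -- entropy inequality ⇒ log-Harnack
    rintro hE Φ hΦm ⟨B, hB⟩ hΦ1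
    have hΦpos : ∀ x, (0 : ℝ) < Φ x := fun x => lt_of_lt_of_le one_pos (hΦ1 x)
    have hΦq : Integrable (fun x => Φ x * q x) π :=
      hqint.bdd_mul (c := B) hΦm.aestronglyMeasurable
        (ae_of_all _ fun x => by rw [Real.norm_eq_abs, abs_of_pos (hΦpos x)]; exact hB x)
    set M := ∫ x, Φ x * q x ∂π with hMdef
    have hM1 : 1 ≤ M := by
      rw [← hq1, hMdef]
      refine integral_mono hqint hΦq fun x => ?_
      exact le_mul_of_one_le_left (hqpos x).le (hΦ1 x)
    have hMpos : (0 : ℝ) < M := lt_of_lt_of_le one_pos hM1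
    have hlogΦint : Integrable (fun x => Real.log (Φ x) * p x) π := by
      refine hpint.bdd_mul (c := Real.log (max B 1)) hΦm.log.aestronglyMeasurable (ae_of_all _ fun x => ?_)
      rw [Real.norm_eq_abs, abs_of_nonneg (Real.log_nonneg (hΦ1 x))]
      exact Real.log_le_log (hΦpos x) ((hB x).trans (le_max_left _ _))
    -- decomposition
    have hdecomp : ∀ x, Real.log (Φ x) * p x
        = p x * Real.log (Φ x * q x / p x) + p x * Real.log (p x / q x) := by
      intro x
      rw [Real.log_div (mul_pos (hΦpos x) (hqpos x)).ne' (hppos x).ne',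
        Real.log_mul (hΦpos x).ne' (hqpos x).ne',
        Real.log_div (hppos x).ne' (hqpos x).ne']
      ring
    have hg1int : Integrable (fun x => p x * Real.log (Φ x * q x / p x)) π := by
      have : (fun x => p x * Real.log (Φ x * q x / p x))
          = fun x => Real.log (Φ x) * p x - p x * Real.log (p x / q x) := by
        funext x
        have := hdecomp x
        linarith
      rw [this]
      exact hlogΦint.sub hent
    -- Jensen-type bound via log t ≤ t/M - 1 + log M
    have hjensen : ∫ x, p x * Real.log (Φ x * q x / p x) ∂π ≤ Real.log M := by
      have hptw : ∀ x, p x * Real.log (Φ x * q x / p x)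
          ≤ Φ x * q x / M - p x + Real.log M * p x := by
        intro x
        have ht : (0 : ℝ) < Φ x * q x / p x :=
          div_pos (mul_pos (hΦpos x) (hqpos x)) (hppos x)
        have hlog : Real.log (Φ x * q x / p x) - Real.log M
            ≤ Φ x * q x / p x / M - 1 := by
          have h0 : (0 : ℝ) < Φ x * q x / p x / M := div_pos ht hMpos
          have := Real.log_le_sub_one_of_pos h0
          rw [Real.log_div ht.ne' hMpos.ne'] at this
          linarith
        have hkey : Real.log (Φ x * q x / p x)
            ≤ Φ x * q x / p x / M - 1 + Real.log M := by linarith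
        calc p x * Real.log (Φ x * q x / p x)
            ≤ p x * (Φ x * q x / p x / M - 1 + Real.log M) :=
              mul_le_mul_of_nonneg_left hkey (hppos x).le
          _ = Φ x * q x / M - p x + Real.log M * p x := by
              have hpe : p x * (Φ x * q x / p x / M) = Φ x * q x / M := by
                rw [div_div, ← mul_div_assoc, mul_div_mul_left _ _ (hppos x).ne']
              rw [mul_add, mul_sub, hpe, mul_one]
              ring
      have hrint : Integrable (fun x => Φ x * q x / M - p x + Real.log M * p x) π := by
        exact ((hΦq.div_const M).sub hpint).add (hpint.const_mul _)
      have := integral_mono hg1int hrint hptw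
      calc ∫ x, p x * Real.log (Φ x * q x / p x) ∂π
          ≤ ∫ x, (Φ x * q x / M - p x + Real.log M * p x) ∂π := this
        _ = (∫ x, Φ x * q x ∂π) / M - (∫ x, p x ∂π)
              + Real.log M * ∫ x, p x ∂π := by
            have hint1 : Integrable (fun x => Φ x * q x / M - p x) π :=
              (hΦq.div_const M).sub hpint
            rw [integral_add hint1 (hpint.const_mul _),
              integral_sub (hΦq.div_const M) hpint, integral_div, integral_const_mul]
        _ = Real.log M := by
            rw [hp1, ← hMdef, div_self hMpos.ne']; ring
    have hsplit : ∫ x, Real.log (Φ x) * p x ∂π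
        = ∫ x, p x * Real.log (Φ x * q x / p x) ∂π
          + ∫ x, p x * Real.log (p x / q x) ∂π := by
      rw [← integral_add hg1int hent]
      exact integral_congr_ae (Filter.Eventually.of_forall hdecomp)
    rw [hsplit]
    have := hjensen
    linarith
end

section
/- Log-Harnack inequality with varying constant implies strong Feller: let E be a metric space and (μ_x)_{x∈E} a family of probability measures on E such that for some constant C > 0, ∫ log Φ dμ_x ≤ log(∫ Φ dμ_y) + C·d(x,y)² for all x, y ∈ E and all bounded measurable Φ ≥ 1. Then for every bounded measurable Φ : E → ℝ, the map x ↦ ∫ Φ dμ_x is continuous on E. -/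
open MeasureTheory

/-- A log-Harnack inequality with constant C·d(x,y)² implies the strong Feller
property: x ↦ ∫ Φ dμ_x is continuous for every bounded measurable Φ. -/
theorem strong_feller_of_logHarnack
    {E : Type*} [MetricSpace E] [MeasurableSpace E] [BorelSpace E]
    (μ : E → Measure E) [∀ x, IsProbabilityMeasure (μ x)]
    (C : ℝ) (hC : 0 < C)
    (hLH : ∀ x y : E, ∀ Φ : E → ℝ, Measurable Φ → (∃ B, ∀ z, Φ z ≤ B) →
      (∀ z, 1 ≤ Φ z) →
      ∫ z, Real.log (Φ z) ∂(μ x) ≤ Real.log (∫ z, Φ z ∂(μ y)) + C * dist x y ^ 2) :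
    ∀ Φ : E → ℝ, Measurable Φ → (∃ B, ∀ z, |Φ z| ≤ B) →
      Continuous (fun x => ∫ z, Φ z ∂(μ x)) := by
  intro Φ hΦ hbd
  obtain ⟨B₀, hB₀⟩ := hbd
  set B : ℝ := max B₀ 0 with hBdef
  have hB : ∀ z, |Φ z| ≤ B := fun z => le_trans (hB₀ z) (le_max_left _ _)
  have hBnn : 0 ≤ B := le_max_right _ _
  -- integrability of bounded measurable functions
  have hIntB : ∀ (w : E) (h : E → ℝ) (M : ℝ), Measurable h → (∀ z, |h z| ≤ M) →
      Integrable h (μ w) := fun w h M hm hb =>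
    (integrable_const M).mono' hm.aestronglyMeasurable
      (ae_of_all _ fun z => by simpa [Real.norm_eq_abs] using hb z)
  have hΦint : ∀ w, Integrable Φ (μ w) := fun w => hIntB w Φ B hΦ hB
  -- lower bound on integrals
  have hFlb : ∀ w, -B ≤ ∫ z, Φ z ∂(μ w) := by
    intro w
    have := integral_mono (μ := μ w) (integrable_const (-B)) (hΦint w)
      (fun z => (abs_le.1 (hB z)).1)
    simpa using this
  -- key one-sided Lipschitz estimate
  have key : ∀ x y : E,
      (∫ z, Φ z ∂(μ x)) - (∫ z, Φ z ∂(μ y)) ≤ (4 * B ^ 2 + C) * dist x y := by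
    intro x y
    rcases eq_or_ne x y with rfl | hxy
    · simp
    set d : ℝ := dist x y with hddef
    have hd : 0 < d := dist_pos.2 hxy
    set g : E → ℝ := fun z => 1 + d * (Φ z + B) with hgdef
    have hgmeas : Measurable g := measurable_const.add ((hΦ.add_const B).const_mul d)
    have hΦB : ∀ z, 0 ≤ Φ z + B := fun z => by
      have := (abs_le.1 (hB z)).1; linarith
    have hΦB2 : ∀ z, Φ z + B ≤ 2 * B := fun z => by
      have := (abs_le.1 (hB z)).2; linarith
    have hg1 : ∀ z, 1 ≤ g z := fun z => by
      have := mul_nonneg hd.le (hΦB z); simp [hgdef]; linarith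
    have hgbd : ∃ B', ∀ z, g z ≤ B' := by
      refine ⟨1 + d * (2 * B), fun z => ?_⟩
      have := mul_le_mul_of_nonneg_left (hΦB2 z) hd.le
      simp only [hgdef]; linarith
    have hmain := hLH x y g hgmeas hgbd hg1
    -- compute ∫ g dμ_y
    have hi1 : Integrable (fun z => Φ z + B) (μ y) := (hΦint y).add (integrable_const B)
    have hi2 : Integrable (fun z => d * (Φ z + B)) (μ y) := hi1.const_mul d
    have hgy : ∫ z, g z ∂(μ y) = 1 + d * ((∫ z, Φ z ∂(μ y)) + B) := by
      rw [hgdef]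
      rw [integral_add (integrable_const 1) hi2, integral_const_mul,
        integral_add (hΦint y) (integrable_const B)]
      simp
    -- upper bound for the log of the integral
    have hFy := hFlb y
    have hup : Real.log (∫ z, g z ∂(μ y)) ≤ d * ((∫ z, Φ z ∂(μ y)) + B) := by
      rw [hgy]
      have hpos : 0 < 1 + d * ((∫ z, Φ z ∂(μ y)) + B) := by nlinarith
      have := Real.log_le_sub_one_of_pos hpos
      linarith
    -- pointwise lower bound on log g
    have hptw : ∀ z, d * (Φ z + B) - 4 * d ^ 2 * B ^ 2 ≤ Real.log (g z) := by
      intro z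
      set t : ℝ := d * (Φ z + B) with htdef
      have ht0 : 0 ≤ t := mul_nonneg hd.le (hΦB z)
      have ht2 : t ≤ d * (2 * B) := mul_le_mul_of_nonneg_left (hΦB2 z) hd.le
      have h1 : (0 : ℝ) < 1 + t := by linarith
      have hlog : 1 - (1 + t)⁻¹ ≤ Real.log (1 + t) := by
        have := Real.log_le_sub_one_of_pos (inv_pos.2 h1)
        rw [Real.log_inv] at this
        linarith
      have hfrac : t - t ^ 2 ≤ 1 - (1 + t)⁻¹ := by
        have : 1 - (1 + t)⁻¹ = t / (1 + t) := by field_simp; ring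
        rw [this, le_div_iff₀ h1]
        nlinarith
      have hsq : t ^ 2 ≤ 4 * d ^ 2 * B ^ 2 := by nlinarith
      have : g z = 1 + t := by simp [hgdef, htdef]
      rw [this]
      linarith
    -- integrate the lower bound
    have hloggmeas : Measurable fun z => Real.log (g z) :=
      Real.measurable_log.comp hgmeas
    have hloggbd : ∀ z, |Real.log (g z)| ≤ d * (2 * B) := by
      intro z
      have h0 : 0 ≤ Real.log (g z) := Real.log_nonneg (hg1 z)
      have h1 : Real.log (g z) ≤ g z - 1 :=
        Real.log_le_sub_one_of_pos (lt_of_lt_of_le one_pos (hg1 z))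
      have h2 : g z - 1 ≤ d * (2 * B) := by
        have := mul_le_mul_of_nonneg_left (hΦB2 z) hd.le
        simp only [hgdef]; linarith
      rw [abs_le]; constructor
      · have : 0 ≤ d * (2 * B) := by positivity
        linarith
      · linarith
    have hlow : d * ((∫ z, Φ z ∂(μ x)) + B) - 4 * d ^ 2 * B ^ 2
        ≤ ∫ z, Real.log (g z) ∂(μ x) := by
      have hj1 : Integrable (fun z => Φ z + B) (μ x) := (hΦint x).add (integrable_const B)
      have hj2 : Integrable (fun z => d * (Φ z + B)) (μ x) := hj1.const_mul d
      have hInt1 : Integrable (fun z => d * (Φ z + B) - 4 * d ^ 2 * B ^ 2) (μ x) :=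
        hj2.sub (integrable_const _)
      have hInt2 : Integrable (fun z => Real.log (g z)) (μ x) :=
        hIntB x _ (d * (2 * B)) hloggmeas hloggbd
      have := integral_mono hInt1 hInt2 hptw
      rw [integral_sub hj2 (integrable_const _), integral_const_mul,
        integral_add (hΦint x) (integrable_const B)] at this
      simpa using this
    -- combine
    have hd2 : C * dist x y ^ 2 = C * d ^ 2 := by rw [hddef]
    rw [hd2] at hmain
    have hchain : d * ((∫ z, Φ z ∂(μ x)) + B) - 4 * d ^ 2 * B ^ 2
        ≤ d * ((∫ z, Φ z ∂(μ y)) + B) + C * d ^ 2 := by linarith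
    have hmul : d * ((∫ z, Φ z ∂(μ x)) - (∫ z, Φ z ∂(μ y)))
        ≤ d * ((4 * B ^ 2 + C) * d) := by ring_nf; ring_nf at hchain; nlinarith
    have := (mul_le_mul_iff_right₀ hd).1 hmul
    simpa [hddef] using this
  -- conclude: Lipschitz, hence continuous
  have hK : (0 : ℝ) ≤ 4 * B ^ 2 + C := by positivity
  refine (LipschitzWith.of_dist_le_mul (K := ⟨4 * B ^ 2 + C, hK⟩)
    (fun x y => ?_)).continuous
  rw [Real.dist_eq]
  have h1 := key x y
  have h2 := key y x
  rw [dist_comm y x] at h2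
  rw [abs_le]
  constructor
  · show -((4 * B ^ 2 + C) * dist x y) ≤ _; linarith
  · exact h1
end
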